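/- The set 𝒜(n,r) of arrow partitions has exactly 2(r−1)(n−r−1) + n elements. -/

import Mathlib

/-- `lam : ℕ → ℕ` is a partition in the `r × (n-r)` box, with the conventions
`lam 0 = n - r` and `lam t = 0` for `t > r` built in. -/
def IsPartition (n r : ℕ) (lam : ℕ → ℕ) : Prop :=
  lam 0 = n - r ∧ (∀ t, r < t → lam t = 0) ∧ ∀ t, lam (t + 1) ≤ lam t

/-- `λ` is an arrow partition: a rectangle `(a^r)`, a two-step partition
`((a+1)^c, a^{r-c})`, or a hook-like partition `(k^a, b, 0^{r-a-1})`. -/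
def IsArrowPartition (n r : ℕ) (lam : ℕ → ℕ) : Prop :=
  IsPartition n r lam ∧
  ((∃ a, a ≤ n - r ∧ ∀ t, 1 ≤ t → t ≤ r → lam t = a) ∨
   (∃ a c, 1 ≤ a ∧ a + 1 ≤ n - r ∧ 1 ≤ c ∧ c + 1 ≤ r ∧
      (∀ t, 1 ≤ t → t ≤ c → lam t = a + 1) ∧ (∀ t, c + 1 ≤ t → t ≤ r → lam t = a)) ∨
   (∃ a b, a + 2 ≤ r ∧ 1 ≤ b ∧ b ≤ n - r ∧
      (∀ t, 1 ≤ t → t ≤ a → lam t = n - r) ∧ lam (a + 1) = b ∧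
      (∀ t, a + 2 ≤ t → t ≤ r → lam t = 0)))

/-!
An arrow partition is determined by its rows `1, …, r`, so with `k = n - r` the three families of
the definition are parametrised injectively by `a`, `(a, c)` and `(a, b)` ranging over sets of
sizes `k + 1`, `(k - 1)(r - 1)` and `(r - 1)k`. The families are pairwise disjoint, as the first
and last rows show: a rectangle has `λ₁ = λᵣ`, a two-step partition `λ₁ = λᵣ + 1` with `λᵣ ≥ 1`,
and a hook `λᵣ = 0 < λ₁`. Finally `(k + 1) + (k - 1)(r - 1) + (r - 1)k = 2(r - 1)(k - 1) + n`.
-/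

theorem IsPartition.ext {n r : ℕ} {f g : ℕ → ℕ} (hf : IsPartition n r f) (hg : IsPartition n r g)
    (h : ∀ t, 1 ≤ t → t ≤ r → f t = g t) : f = g := by
  funext t
  rcases Nat.eq_zero_or_pos t with rfl | ht
  · rw [hf.1, hg.1]
  · by_cases htr : t ≤ r
    · exact h t ht htr
    · rw [hf.2.1 t (by omega), hg.2.1 t (by omega)]

namespace ArrowPartition

section Families

variable (k r : ℕ)

def rect (a : ℕ) (t : ℕ) : ℕ :=
  if t = 0 then k else if t ≤ r then a else 0

/-- The partition `((a+1)^c, a^{r-c})`, for `p = (a, c)`. -/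
def twoStep (p : ℕ × ℕ) (t : ℕ) : ℕ :=
  if t = 0 then k else if t ≤ p.2 then p.1 + 1 else if t ≤ r then p.1 else 0

/-- The partition `(k^a, b, 0^{r-a-1})`, for `p = (a, b)`. -/
def hook (p : ℕ × ℕ) (t : ℕ) : ℕ :=
  if t ≤ p.1 then k else if t = p.1 + 1 then p.2 else 0

def twoStepParams : Finset (ℕ × ℕ) := Finset.Icc 1 (k - 1) ×ˢ Finset.Icc 1 (r - 1)

def hookParams : Finset (ℕ × ℕ) := Finset.range (r - 1) ×ˢ Finset.Icc 1 k

def arrowFamilies : Set (ℕ → ℕ) :=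
  rect k r '' ↑(Finset.range (k + 1)) ∪ twoStep k r '' ↑(twoStepParams k r) ∪
    hook k '' ↑(hookParams k r)

theorem rect_injective (hr : 1 ≤ r) : Function.Injective (rect k r) := by
  intro a a' h
  simpa [rect, hr] using congrFun h 1

theorem twoStep_injOn : Set.InjOn (twoStep k r) {p | p.2 < r} := by
  rintro ⟨a, c⟩ (hc : c < r) ⟨a', c'⟩ (hc' : c' < r) h
  have hlast := congrFun h r
  have hstep := congrFun h (c + 1)
  have hstep' := congrFun h (c' + 1)
  grind [twoStep]

theorem hook_injOn : Set.InjOn (hook k) {p | 1 ≤ p.2} := by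
  rintro ⟨a, b⟩ (hb : 1 ≤ b) ⟨a', b'⟩ (hb' : 1 ≤ b') h
  have hcorner := congrFun h (a + 1)
  have hcorner' := congrFun h (a' + 1)
  grind [hook]

theorem disjoint_rect_twoStep (hr : 1 ≤ r) :
    Disjoint (Set.range (rect k r)) (twoStep k r '' ↑(twoStepParams k r)) := by
  refine Set.disjoint_left.2 ?_
  rintro _ ⟨a, rfl⟩ ⟨⟨a', c⟩, hp, h⟩
  simp only [Finset.mem_coe, twoStepParams, Finset.mem_product, Finset.mem_Icc] at hp
  have hfirst := congrFun h 1
  have hlast := congrFun h r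
  grind [rect, twoStep]

theorem disjoint_rect_hook : Disjoint (Set.range (rect k r)) (hook k '' ↑(hookParams k r)) := by
  refine Set.disjoint_left.2 ?_
  rintro _ ⟨a, rfl⟩ ⟨⟨a', b⟩, hp, h⟩
  simp only [Finset.mem_coe, hookParams, Finset.mem_product, Finset.mem_range,
    Finset.mem_Icc] at hp
  have hfirst := congrFun h 1
  have hlast := congrFun h r
  grind [rect, hook]

theorem disjoint_twoStep_hook :
    Disjoint (twoStep k r '' ↑(twoStepParams k r)) (hook k '' ↑(hookParams k r)) := by
  refine Set.disjoint_left.2 ?_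
  rintro _ ⟨⟨a, c⟩, hp, rfl⟩ ⟨⟨a', b⟩, hq, h⟩
  simp only [Finset.mem_coe, twoStepParams, hookParams, Finset.mem_product, Finset.mem_range,
    Finset.mem_Icc] at hp hq
  have hlast := congrFun h r
  grind [twoStep, hook]

theorem ncard_arrowFamilies (hr : 1 ≤ r) :
    (arrowFamilies k r).ncard = (k + 1) + (k - 1) * (r - 1) + (r - 1) * k := by
  have hsub := Set.image_subset_range (rect k r) ↑(Finset.range (k + 1))
  have htwoStep : Set.InjOn (twoStep k r) ↑(twoStepParams k r) :=
    (twoStep_injOn k r).mono fun p hp => by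
      simp only [Finset.mem_coe, twoStepParams, Finset.mem_product, Finset.mem_Icc] at hp
      exact show p.2 < r by omega
  have hhook : Set.InjOn (hook k) ↑(hookParams k r) :=
    (hook_injOn k).mono fun p hp => by
      simp only [Finset.mem_coe, hookParams, Finset.mem_product, Finset.mem_Icc] at hp
      exact show 1 ≤ p.2 by omega
  rw [arrowFamilies, Set.ncard_union_eq (Set.disjoint_union_left.2
      ⟨(disjoint_rect_hook k r).mono_left hsub, disjoint_twoStep_hook k r⟩),
    Set.ncard_union_eq ((disjoint_rect_twoStep k r hr).mono_left hsub),
    Set.ncard_image_of_injective _ (rect_injective k r hr), htwoStep.ncard_image,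
    hhook.ncard_image]
  simp only [Set.ncard_coe_finset, twoStepParams, hookParams, Finset.card_product,
    Finset.card_range, Nat.card_Icc, Nat.add_sub_cancel]

end Families

section Box

variable {n r : ℕ}

theorem isPartition_rect {a : ℕ} (ha : a ≤ n - r) : IsPartition n r (rect (n - r) r a) := by
  refine ⟨rfl, fun t ht => ?_, fun t => ?_⟩ <;> grind [rect]

theorem isPartition_twoStep {a c : ℕ} (ha : a + 1 ≤ n - r) (hc : c ≤ r) :
    IsPartition n r (twoStep (n - r) r (a, c)) := by
  refine ⟨rfl, fun t ht => ?_, fun t => ?_⟩ <;> grind [twoStep]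

theorem isPartition_hook {a b : ℕ} (ha : a < r) (hb : b ≤ n - r) :
    IsPartition n r (hook (n - r) (a, b)) := by
  refine ⟨by simp [hook], fun t ht => ?_, fun t => ?_⟩ <;> grind [hook]

theorem isArrowPartition_iff_mem_arrowFamilies (hrn : r < n) {lam : ℕ → ℕ} :
    IsArrowPartition n r lam ↔ lam ∈ arrowFamilies (n - r) r := by
  simp only [arrowFamilies, twoStepParams, hookParams, Set.mem_union, Set.mem_image,
    Finset.coe_product, Set.mem_prod, Finset.mem_coe, Finset.mem_range, Finset.mem_Icc,
    Prod.exists]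
  constructor
  · rintro ⟨hlam, ⟨a, ha, hv⟩ | ⟨a, c, ha1, ha2, hc1, hc2, hv1, hv2⟩ |
      ⟨a, b, har, hb1, hb2, hv1, hv2, hv3⟩⟩
    · exact Or.inl (Or.inl ⟨a, by omega, (isPartition_rect ha).ext hlam (by grind [rect])⟩)
    · exact Or.inl (Or.inr ⟨a, c, by omega,
        (isPartition_twoStep ha2 (by omega)).ext hlam (by grind [twoStep])⟩)
    · exact Or.inr ⟨a, b, by omega, (isPartition_hook (by omega) hb2).ext hlam (by grind [hook])⟩
  · rintro ((⟨a, ha, rfl⟩ | ⟨a, c, hac, rfl⟩) | ⟨a, b, hab, rfl⟩)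
    · exact ⟨isPartition_rect (by omega), Or.inl ⟨a, by omega, by grind [rect]⟩⟩
    · exact ⟨isPartition_twoStep (by omega) (by omega),
        Or.inr (Or.inl ⟨a, c, by omega, by omega, by omega, by omega, by grind [twoStep],
          by grind [twoStep]⟩)⟩
    · exact ⟨isPartition_hook (by omega) (by omega),
        Or.inr (Or.inr ⟨a, b, by omega, by omega, by omega, by grind [hook], by grind [hook],
          by grind [hook]⟩)⟩

end Box

end ArrowPartition

open ArrowPartition in
/-- the set `𝒜(n,r)` of arrow partitions has exactly
`2(r-1)(n-r-1) + n` elements. -/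
theorem card_arrow_partitions (n r : ℕ) (hr : 1 ≤ r) (hrn : r < n) :
    {lam : ℕ → ℕ | IsArrowPartition n r lam}.ncard =
      2 * (r - 1) * (n - r - 1) + n := by
  have hset : {lam : ℕ → ℕ | IsArrowPartition n r lam} = arrowFamilies (n - r) r :=
    Set.ext fun _ => isArrowPartition_iff_mem_arrowFamilies hrn
  rw [hset, ncard_arrowFamilies _ _ hr]
  obtain ⟨r, rfl⟩ : ∃ r', r = r' + 1 := ⟨r - 1, by omega⟩
  obtain ⟨k, rfl⟩ : ∃ k, n = r + 1 + (k + 1) := ⟨n - r - 2, by omega⟩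
  simp only [show r + 1 + (k + 1) - (r + 1) = k + 1 by omega, Nat.add_sub_cancel]
  ring
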